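/- arXiv:2103.08445 — 5 statements merged into one kernel-verified Lean document; each statement's English description precedes it below -/
import Mathlib

section
/- Let V be a finite set, Z ⊆ V, M₁ a matching (set of pairwise disjoint 2-element subsets) of V \ Z, and M₂ a matching of V such that every edge of M₂ has at most one endpoint in V(M₁) ∪ Z, where V(M) denotes the union of the edges of M. Then 2·|V \ (V(M₁) ∪ Z)| + 2·|V(M₁) ∪ V(M₂) ∪ Z| + |V \ V(M₂)| ≥ 3·|V|. Consequently, at least one of the three sets V \ (V(M₁) ∪ Z), V(M₁) ∪ V(M₂) ∪ Z, V \ V(M₂) has size at least 0.6·|V|. -/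
open Finset

/-! Put `A = V(M₁) ∪ Z` and `B = V(M₂)`. Every edge of `M₂` has a vertex outside `A`, so
`|A ∩ B| ≤ |M₂| = |B| / 2`. Hence `|V \ A| + |A ∪ B| ≥ |V| + |B| / 2`, and adding half of
`|V \ B| = |V| - |B|` gives the inequality. Its left side has total weight `5`, so one of the
three sets has size at least `3/5` of `|V|`. -/

/-- `M` is a matching of the finite set `S`: a family of pairwise disjoint
2-element subsets of `S`. -/
def IsMatchingOf {α : Type*} [DecidableEq α] (M : Finset (Finset α)) (S : Finset α) : Prop :=
  (∀ e ∈ M, e.card = 2 ∧ e ⊆ S) ∧ ∀ e ∈ M, ∀ f ∈ M, e ≠ f → Disjoint e f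

/-- The vertex set `V(M)` of a matching: the union of its edges. -/
def matchVerts {α : Type*} [DecidableEq α] (M : Finset (Finset α)) : Finset α :=
  M.biUnion id

namespace IsMatchingOf

variable {α : Type*} [DecidableEq α] {M : Finset (Finset α)} {S : Finset α}

theorem matchVerts_subset (hM : IsMatchingOf M S) : matchVerts M ⊆ S :=
  biUnion_subset.2 fun e he => (hM.1 e he).2

theorem card_matchVerts (hM : IsMatchingOf M S) : #(matchVerts M) = 2 * #M :=
  calc #(matchVerts M) = ∑ e ∈ M, #e := card_biUnion hM.2
    _ = ∑ _e ∈ M, 2 := sum_congr rfl fun e he => (hM.1 e he).1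
    _ = 2 * #M := by rw [sum_const, smul_eq_mul, mul_comm]

end IsMatchingOf

theorem card_matchVerts_inter_le {α : Type*} [DecidableEq α] {M : Finset (Finset α)}
    {A : Finset α} (hA : ∀ e ∈ M, #(e ∩ A) ≤ 1) : #(matchVerts M ∩ A) ≤ #M :=
  calc #(matchVerts M ∩ A) = #(M.biUnion fun e => e ∩ A) := by
        rw [matchVerts, biUnion_inter]; rfl
    _ ≤ ∑ e ∈ M, #(e ∩ A) := card_biUnion_le
    _ ≤ ∑ _e ∈ M, 1 := sum_le_sum hA
    _ = #M := card_eq_sum_ones M |>.symm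

theorem three_mul_card_le_of_isMatchingOf {α : Type*} [DecidableEq α] {M : Finset (Finset α)}
    {V A : Finset α} (hM : IsMatchingOf M V) (hA : ∀ e ∈ M, #(e ∩ A) ≤ 1) :
    3 * #V ≤ 2 * #(V \ A) + 2 * #(A ∪ matchVerts M) + #(V \ matchVerts M) := by
  have hVA := card_sdiff_add_card_inter V A
  have hVA_le : #(V ∩ A) ≤ #A := card_le_card inter_subset_right
  have hAB := card_union_add_card_inter A (matchVerts M)
  have hBA : #(A ∩ matchVerts M) ≤ #M := inter_comm A _ ▸ card_matchVerts_inter_le hA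
  have hB := hM.card_matchVerts
  have hVB := card_sdiff_add_card_eq_card hM.matchVerts_subset
  omega

theorem le_or_le_or_le_of_three_mul_le {n a b c : ℕ} (h : 3 * n ≤ 2 * a + 2 * b + c) :
    (0.6 : ℚ) * n ≤ a ∨ (0.6 : ℚ) * n ≤ b ∨ (0.6 : ℚ) * n ≤ c := by
  by_contra! hlt
  have hq : (3 : ℚ) * n ≤ 2 * a + 2 * b + c := by exact_mod_cast h
  linarith [hlt.1, hlt.2.1, hlt.2.2]

theorem matchings_counting_general {α : Type*} [DecidableEq α]
    (V Z : Finset α) (M₁ M₂ : Finset (Finset α))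
    (hM₂ : IsMatchingOf M₂ V)
    (hM₂end : ∀ e ∈ M₂, (e ∩ (matchVerts M₁ ∪ Z)).card ≤ 1) :
    2 * (V \ (matchVerts M₁ ∪ Z)).card
      + 2 * (matchVerts M₁ ∪ matchVerts M₂ ∪ Z).card
      + (V \ matchVerts M₂).card ≥ 3 * V.card ∧
    ((0.6 : ℚ) * V.card ≤ (V \ (matchVerts M₁ ∪ Z)).card ∨
     (0.6 : ℚ) * V.card ≤ (matchVerts M₁ ∪ matchVerts M₂ ∪ Z).card ∨
     (0.6 : ℚ) * V.card ≤ (V \ matchVerts M₂).card) := by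
  rw [union_right_comm]
  have h := three_mul_card_le_of_isMatchingOf hM₂ hM₂end
  exact ⟨h, le_or_le_or_le_of_three_mul_le h⟩

theorem matchings_counting {α : Type*} [DecidableEq α]
    (V Z : Finset α) (M₁ M₂ : Finset (Finset α))
    (hZ : Z ⊆ V)
    (hM₁ : IsMatchingOf M₁ (V \ Z))
    (hM₂ : IsMatchingOf M₂ V)
    (hM₂end : ∀ e ∈ M₂, (e ∩ (matchVerts M₁ ∪ Z)).card ≤ 1) :
    2 * (V \ (matchVerts M₁ ∪ Z)).card
      + 2 * (matchVerts M₁ ∪ matchVerts M₂ ∪ Z).card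
      + (V \ matchVerts M₂).card ≥ 3 * V.card ∧
    ((0.6 : ℚ) * V.card ≤ (V \ (matchVerts M₁ ∪ Z)).card ∨
     (0.6 : ℚ) * V.card ≤ (matchVerts M₁ ∪ matchVerts M₂ ∪ Z).card ∨
     (0.6 : ℚ) * V.card ≤ (V \ matchVerts M₂).card) :=
  matchings_counting_general V Z M₁ M₂ hM₂ hM₂end
end

section
/- Let r ≥ 2 be an integer, d > 0 a real, and let H be a graph whose vertex set is partitioned into color classes V₁, ..., V_r such that |V_i| ≥ 4e(r−1)d for every i, each V_i is an independent set, and for all i ≠ j the graph H[V_i ∪ V_j] is d-degenerate. Then there exist vertices x₁ ∈ V₁, ..., x_r ∈ V_r forming an independent set in H. -/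
open scoped Classical
open Finset

namespace RWAux


lemma exp_neg_one_le_pow {t : ℝ} {m : ℕ} (ht0 : 0 < t) (ht1 : t < 1)
    (hm : (m:ℝ) * t ≤ 1 - t) : Real.exp (-1) ≤ (1-t)^m := by
  have h1t : (0:ℝ) < 1 - t := by linarith
  have e1 : t/(1-t) + 1 = 1/(1-t) := by field_simp; ring
  have h2 : 1/(1-t) ≤ Real.exp (t/(1-t)) := by
    rw [← e1]; linarith [Real.add_one_le_exp (t/(1-t))]
  have hbase : Real.exp (-(t/(1-t))) ≤ 1 - t := by
    rw [Real.exp_neg]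
    have h3 : (0:ℝ) < 1/(1-t) := by positivity
    calc (Real.exp (t/(1-t)))⁻¹ ≤ (1/(1-t))⁻¹ := by
          exact inv_anti₀ h3 h2
      _ = 1 - t := by rw [one_div, inv_inv]
  have hmono : Real.exp (-(t/(1-t))) ^ m ≤ (1-t)^m :=
    pow_le_pow_left₀ (Real.exp_nonneg _) hbase m
  refine le_trans ?_ hmono
  rw [← Real.exp_nat_mul]
  apply Real.exp_le_exp.2
  have hdiv : (m:ℝ) * (t/(1-t)) ≤ 1 := by
    rw [mul_div_assoc'] at *
    rw [div_le_one h1t]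
    linarith
  nlinarith

lemma degen_pairs_bound {α : Type*} (H : SimpleGraph α) (d : ℝ) (hd : 0 ≤ d)
    (W : Finset α)
    (hdeg : ∀ t ⊆ W, t.Nonempty → ∃ v ∈ t, ((t.filter (fun u => H.Adj v u)).card : ℝ) ≤ d) :
    ∀ t ⊆ W, (((t ×ˢ t).filter (fun p => H.Adj p.1 p.2)).card : ℝ) ≤ 2*d*t.card := by
  intro t
  induction t using Finset.strongInduction with
  | _ t ih =>
  intro htW
  rcases t.eq_empty_or_nonempty with rfl | hne
  · simp
  obtain ⟨v, hvt, hvdeg⟩ := hdeg t htW hne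
  have ht' : t.erase v ⊂ t := erase_ssubset hvt
  have ihh := ih (t.erase v) ht' ((erase_subset v t).trans htW)
  set Pt := (t ×ˢ t).filter (fun p => H.Adj p.1 p.2) with hPt
  have split1 : (Pt.filter (fun p => p.1 = v)).card
      + (Pt.filter (fun p => ¬ p.1 = v)).card = Pt.card :=
    card_filter_add_card_filter_not _
  have split2 : ((Pt.filter (fun p => ¬ p.1 = v)).filter (fun p => p.2 = v)).card
      + ((Pt.filter (fun p => ¬ p.1 = v)).filter (fun p => ¬ p.2 = v)).card
      = (Pt.filter (fun p => ¬ p.1 = v)).card :=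
    card_filter_add_card_filter_not _
  have b1 : (Pt.filter (fun p => p.1 = v)).card ≤ (t.filter (fun u => H.Adj v u)).card := by
    apply card_le_card_of_injOn (fun p => p.2)
    · intro p hp
      simp only [hPt, mem_coe, mem_filter, mem_product] at hp
      exact mem_filter.2 ⟨hp.1.1.2, by rw [← hp.2]; exact hp.1.2⟩
    · intro p hp p' hp' hEq
      simp only [coe_filter, Set.mem_setOf_eq] at hp hp'
      exact Prod.ext (hp.2.trans hp'.2.symm) hEq
  have b2 : ((Pt.filter (fun p => ¬ p.1 = v)).filter (fun p => p.2 = v)).card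
      ≤ (t.filter (fun u => H.Adj v u)).card := by
    apply card_le_card_of_injOn (fun p => p.1)
    · intro p hp
      simp only [hPt, mem_coe, mem_filter, mem_product] at hp
      exact mem_filter.2 ⟨hp.1.1.1.1, H.adj_symm (by rw [← hp.2]; exact hp.1.1.2)⟩
    · intro p hp p' hp' hEq
      simp only [coe_filter, Set.mem_setOf_eq] at hp hp'
      exact Prod.ext hEq (hp.2.trans hp'.2.symm)
  have b3 : (Pt.filter (fun p => ¬ p.1 = v)).filter (fun p => ¬ p.2 = v)
      ⊆ (t.erase v ×ˢ t.erase v).filter (fun p => H.Adj p.1 p.2) := by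
    intro p hp
    simp only [hPt, mem_filter, mem_product, mem_erase] at hp ⊢
    tauto
  have b3' := card_le_card b3
  have hcard' : ((t.erase v).card : ℝ) = (t.card : ℝ) - 1 := by
    rw [card_erase_of_mem hvt]
    have h1 : 1 ≤ t.card := card_pos.2 hne
    push_cast [Nat.cast_sub h1]
    ring
  have c1 : ((Pt.filter (fun p => p.1 = v)).card : ℝ) ≤ d :=
    le_trans (by exact_mod_cast b1) hvdeg
  have c2 : (((Pt.filter (fun p => ¬ p.1 = v)).filter (fun p => p.2 = v)).card : ℝ) ≤ d :=
    le_trans (by exact_mod_cast b2) hvdeg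
  have c3 : (((Pt.filter (fun p => ¬ p.1 = v)).filter (fun p => ¬ p.2 = v)).card : ℝ)
      ≤ 2*d*((t.card : ℝ) - 1) := by
    rw [← hcard']
    exact le_trans (by exact_mod_cast b3') ihh
  have e1 : ((Pt.filter (fun p => p.1 = v)).card : ℝ)
      + (((Pt.filter (fun p => ¬ p.1 = v)).filter (fun p => p.2 = v)).card : ℝ)
      + (((Pt.filter (fun p => ¬ p.1 = v)).filter (fun p => ¬ p.2 = v)).card : ℝ)
      = (Pt.card : ℝ) := by
    push_cast [← split1, ← split2]
    ring
  linarith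



variable {α : Type*} [Fintype α] {r : ℕ}

abbrev Ev (α : Type*) (r : ℕ) := (Fin r × Fin r) × α × α

def sat (y : Fin r → α) (q : Ev α r) : Prop := y q.1.1 = q.2.1 ∧ y q.1.2 = q.2.2

def shares (q f : Ev α r) : Prop :=
  f.1.1 = q.1.1 ∨ f.1.1 = q.1.2 ∨ f.1.2 = q.1.1 ∨ f.1.2 = q.1.2

noncomputable def Av (U : Fin r → Finset α) (S : Finset (Ev α r)) : Finset (Fin r → α) :=
  (Fintype.piFinset U).filter (fun y => ∀ q ∈ S, ¬ sat y q)

lemma Av_anti (U : Fin r → Finset α) {S T : Finset (Ev α r)} (h : S ⊆ T) :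
    Av U T ⊆ Av U S := by
  intro y hy
  simp only [Av, mem_filter] at hy ⊢
  exact ⟨hy.1, fun q hq => hy.2 q (h hq)⟩

lemma Av_insert (U : Fin r → Finset α) (S : Finset (Ev α r)) (q : Ev α r) :
    Av U (insert q S) = (Av U S).filter (fun y => ¬ sat y q) := by
  ext y
  simp only [Av, mem_filter, forall_mem_insert, and_assoc]
  tauto

/-- fibers over (y i, y j) all have the same size -/
lemma fiber_card_eq (U : Fin r → Finset α) (S₂ : Finset (Ev α r))
    {i j : Fin r} (hij : i ≠ j)
    (hS₂ : ∀ f ∈ S₂, f.1.1 ≠ i ∧ f.1.1 ≠ j ∧ f.1.2 ≠ i ∧ f.1.2 ≠ j)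
    {u v u' v' : α} (hu : u ∈ U i) (hv : v ∈ U j) (hu' : u' ∈ U i) (hv' : v' ∈ U j) :
    ((Av U S₂).filter (fun y => y i = u ∧ y j = v)).card
      = ((Av U S₂).filter (fun y => y i = u' ∧ y j = v')).card := by
  have move : ∀ (a : α) (b : α), a ∈ U i → b ∈ U j →
      ∀ y ∈ Av U S₂, Function.update (Function.update y i a) j b ∈ Av U S₂ := by
    intro a b ha hb y hy
    simp only [Av, mem_filter] at hy ⊢
    constructor
    · rw [Fintype.mem_piFinset] at *
      intro w
      rcases eq_or_ne w j with rfl | hwj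
      · simpa using hb
      · rw [Function.update_of_ne hwj]
        rcases eq_or_ne w i with rfl | hwi
        · simpa using ha
        · rw [Function.update_of_ne hwi]; exact hy.1 w
    · intro f hf
      obtain ⟨h1, h2, h3, h4⟩ := hS₂ f hf
      have e1 : Function.update (Function.update y i a) j b f.1.1 = y f.1.1 := by
        rw [Function.update_of_ne h2, Function.update_of_ne h1]
      have e2 : Function.update (Function.update y i a) j b f.1.2 = y f.1.2 := by
        rw [Function.update_of_ne h4, Function.update_of_ne h3]
      intro hsat
      exact hy.2 f hf ⟨by rw [← e1]; exact hsat.1, by rw [← e2]; exact hsat.2⟩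
  have val_i : ∀ (y : Fin r → α) (a b : α),
      Function.update (Function.update y i a) j b i = a := by
    intro y a b
    rw [Function.update_of_ne hij, Function.update_self]
  have val_j : ∀ (y : Fin r → α) (a b : α),
      Function.update (Function.update y i a) j b j = b := by
    intro y a b; rw [Function.update_self]
  apply Finset.card_bij' (fun y _ => Function.update (Function.update y i u') j v')
    (fun y _ => Function.update (Function.update y i u) j v)
  · intro y hy
    simp only [mem_filter] at hy
    funext w
    rcases eq_or_ne w j with rfl | hwj
    · rw [val_j]; exact hy.2.2.symm
    · rcases eq_or_ne w i with rfl | hwi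
      · rw [Function.update_of_ne hij, Function.update_self]
        exact hy.2.1.symm
      · simp [Function.update_of_ne hwj, Function.update_of_ne hwi]
  · intro y hy
    simp only [mem_filter] at hy
    funext w
    rcases eq_or_ne w j with rfl | hwj
    · rw [val_j]; exact hy.2.2.symm
    · rcases eq_or_ne w i with rfl | hwi
      · rw [Function.update_of_ne hij, Function.update_self]
        exact hy.2.1.symm
      · simp [Function.update_of_ne hwj, Function.update_of_ne hwi]
  · intro y hy
    simp only [mem_filter] at hy ⊢
    exact ⟨move u' v' hu' hv' y hy.1, val_i y u' v', val_j y u' v'⟩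
  · intro y hy
    simp only [mem_filter] at hy ⊢
    exact ⟨move u v hu hv y hy.1, val_i y u v, val_j y u v⟩

lemma fiber_total (U : Fin r → Finset α) (S₂ : Finset (Ev α r))
    {i j : Fin r} (hij : i ≠ j)
    (hS₂ : ∀ f ∈ S₂, f.1.1 ≠ i ∧ f.1.1 ≠ j ∧ f.1.2 ≠ i ∧ f.1.2 ≠ j)
    {u : α} {v : α} (hu : u ∈ U i) (hv : v ∈ U j) :
    ((Av U S₂).card : ℕ) =
      ((U i).card * (U j).card) * ((Av U S₂).filter (fun y => y i = u ∧ y j = v)).card := by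
  have hmap : ∀ y ∈ Av U S₂, (y i, y j) ∈ (U i) ×ˢ (U j) := by
    intro y hy
    simp only [Av, mem_filter, Fintype.mem_piFinset] at hy
    exact mem_product.2 ⟨hy.1 i, hy.1 j⟩
  have := Finset.card_eq_sum_card_fiberwise hmap
  rw [this]
  have : ∀ p ∈ (U i) ×ˢ (U j),
      ((Av U S₂).filter (fun y => (y i, y j) = p)).card
        = ((Av U S₂).filter (fun y => y i = u ∧ y j = v)).card := by
    intro p hp
    rw [mem_product] at hp
    have : ((Av U S₂).filter (fun y => (y i, y j) = p))
        = ((Av U S₂).filter (fun y => y i = p.1 ∧ y j = p.2)) := by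
      apply filter_congr; intro y _; simp [Prod.ext_iff]
    rw [this]
    exact fiber_card_eq U S₂ hij hS₂ hp.1 hp.2 hu hv
  rw [Finset.sum_congr rfl this, Finset.sum_const, card_product, smul_eq_mul]



lemma main_step (U : Fin r → Finset α) (F : Finset (Ev α r))
    (hF : ∀ q ∈ F, q.1.1 ≠ q.1.2 ∧ q.2.1 ∈ U q.1.1 ∧ q.2.2 ∈ U q.1.2)
    (x : ℝ) (hx0 : 0 < x) (hx1 : x < 1)
    (key : ∀ q ∈ F, (1:ℝ) ≤ x * (1-x) ^ ((F.filter (fun f => f ≠ q ∧ shares q f)).card)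
        * (((U q.1.1).card : ℝ) * ((U q.1.2).card : ℝ))) :
    ∀ n (S : Finset (Ev α r)), S ⊆ F → S.card = n → ∀ q ∈ F, q ∉ S →
      (1-x) * ((Av U S).card : ℝ) ≤ ((Av U (insert q S)).card : ℝ) := by
  intro n
  induction n using Nat.strong_induction_on with
  | _ n IH =>
  intro S hSF hcard q hqF hqS
  obtain ⟨hij, hu, hv⟩ := hF q hqF
  set S₂ := S.filter (fun f => ¬ shares q f) with hS₂def
  set S₁ := S.filter (fun f => shares q f) with hS₁def
  have hS₂prop : ∀ f ∈ S₂, f.1.1 ≠ q.1.1 ∧ f.1.1 ≠ q.1.2 ∧ f.1.2 ≠ q.1.1 ∧ f.1.2 ≠ q.1.2 := by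
    intro f hf
    have h := (mem_filter.1 hf).2
    simp only [shares, not_or] at h
    tauto
  have build : ∀ B, B ⊆ S₁ →
      (1-x) ^ B.card * ((Av U S₂).card : ℝ) ≤ ((Av U (S₂ ∪ B)).card : ℝ) := by
    intro B
    induction B using Finset.induction_on with
    | empty => intro _; simp
    | @insert f B hfB ihB =>
      intro hsub
      have hBS₁ : B ⊆ S₁ := fun a ha => hsub (mem_insert_of_mem ha)
      have hfS₁ : f ∈ S₁ := hsub (mem_insert_self f B)
      have hfS : f ∈ S := (mem_filter.1 hfS₁).1
      have hfF : f ∈ F := hSF hfS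
      have hfnot : f ∉ S₂ ∪ B := by
        intro h
        rcases mem_union.1 h with h | h
        · exact (mem_filter.1 h).2 (mem_filter.1 hfS₁).2
        · exact hfB h
      have hsubS : S₂ ∪ B ⊆ S :=
        union_subset (filter_subset _ _) (fun a ha => (mem_filter.1 (hBS₁ ha)).1)
      have hlt : (S₂ ∪ B).card < n := by
        rw [← hcard]
        exact card_lt_card ((Finset.ssubset_iff_of_subset hsubS).2 ⟨f, hfS, hfnot⟩)
      have hstep := IH _ hlt (S₂ ∪ B) (hsubS.trans hSF) rfl f hfF hfnot
      have h1x : (0:ℝ) ≤ 1 - x := by linarith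
      have : S₂ ∪ insert f B = insert f (S₂ ∪ B) := by
        rw [Finset.union_insert]
      rw [this, card_insert_of_notMem hfB]
      calc (1-x) ^ (B.card + 1) * ((Av U S₂).card : ℝ)
          = (1-x) * ((1-x) ^ B.card * ((Av U S₂).card : ℝ)) := by ring
        _ ≤ (1-x) * ((Av U (S₂ ∪ B)).card : ℝ) :=
            mul_le_mul_of_nonneg_left (ihB hBS₁) h1x
        _ ≤ ((Av U (insert f (S₂ ∪ B))).card : ℝ) := hstep
  have hbuild := build S₁ (subset_refl _)
  have hUnion : S₂ ∪ S₁ = S := by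
    rw [union_comm]
    exact filter_union_filter_not_eq _ S
  rw [hUnion] at hbuild
  have hfib := fiber_total U S₂ hij hS₂prop hu hv
  have hsubfil : (Av U S).filter (fun y => sat y q)
      ⊆ (Av U S₂).filter (fun y => y q.1.1 = q.2.1 ∧ y q.1.2 = q.2.2) := by
    intro y hy
    rw [mem_filter] at hy ⊢
    exact ⟨Av_anti U (filter_subset _ _) hy.1, hy.2⟩
  have hsplitcard : ((Av U S).filter (fun y => sat y q)).card + (Av U (insert q S)).card
      = (Av U S).card := by
    rw [Av_insert]
    exact card_filter_add_card_filter_not _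
  have hS₁Γ : S₁ ⊆ F.filter (fun f => f ≠ q ∧ shares q f) := by
    intro f hf
    rw [mem_filter] at hf ⊢
    exact ⟨hSF hf.1, fun h => hqS (h ▸ hf.1), hf.2⟩
  set m := (F.filter (fun f => f ≠ q ∧ shares q f)).card with hm
  set k := S₁.card with hk
  have h1x0 : (0:ℝ) ≤ 1 - x := by linarith
  have hpow : (1-x) ^ m ≤ (1-x) ^ k :=
    pow_le_pow_of_le_one h1x0 (by linarith) (card_le_card hS₁Γ)
  set P : ℝ := ((U q.1.1).card : ℝ) * ((U q.1.2).card : ℝ) with hP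
  have hP0 : 0 ≤ P := by positivity
  have f6 : (1:ℝ) ≤ x * (1-x) ^ m * P := key q hqF
  set A : ℝ := (((Av U S).filter (fun y => sat y q)).card : ℝ) with hA
  set fib : ℝ := (((Av U S₂).filter
      (fun y => y q.1.1 = q.2.1 ∧ y q.1.2 = q.2.2)).card : ℝ) with hfibdef
  have f2 : ((Av U S₂).card : ℝ) = P * fib := by
    rw [hP, hfibdef]
    exact_mod_cast congrArg (Nat.cast : ℕ → ℝ) hfib
  have f3 : A ≤ fib := by rw [hA, hfibdef]; exact_mod_cast card_le_card hsubfil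
  have f1 : A + ((Av U (insert q S)).card : ℝ) = ((Av U S).card : ℝ) := by
    rw [hA]
    exact_mod_cast congrArg (Nat.cast : ℕ → ℝ) hsplitcard
  have hA0 : 0 ≤ A := by rw [hA]; exact Nat.cast_nonneg _
  have hk1 : (1:ℝ) ≤ x * (1-x) ^ k * P := by
    refine f6.trans ?_
    have : x * (1-x)^m ≤ x * (1-x)^k := mul_le_mul_of_nonneg_left hpow (le_of_lt hx0)
    exact mul_le_mul_of_nonneg_right this hP0
  have hAx : A ≤ x * ((Av U S).card : ℝ) := by
    calc A ≤ A * (x * (1-x) ^ k * P) := le_mul_of_one_le_right hA0 hk1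
      _ = x * ((1-x) ^ k * (A * P)) := by ring
      _ ≤ x * ((1-x) ^ k * (fib * P)) := by
          apply mul_le_mul_of_nonneg_left _ (le_of_lt hx0)
          apply mul_le_mul_of_nonneg_left _ (pow_nonneg h1x0 _)
          exact mul_le_mul_of_nonneg_right f3 hP0
      _ = x * ((1-x) ^ k * ((Av U S₂).card : ℝ)) := by rw [f2]; ring
      _ ≤ x * ((Av U S).card : ℝ) := mul_le_mul_of_nonneg_left hbuild (le_of_lt hx0)
  linarith


lemma lll (U : Fin r → Finset α) (hU : ∀ i, (U i).Nonempty) (F : Finset (Ev α r))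
    (hF : ∀ q ∈ F, q.1.1 ≠ q.1.2 ∧ q.2.1 ∈ U q.1.1 ∧ q.2.2 ∈ U q.1.2)
    (x : ℝ) (hx0 : 0 < x) (hx1 : x < 1)
    (key : ∀ q ∈ F, (1:ℝ) ≤ x * (1-x) ^ ((F.filter (fun f => f ≠ q ∧ shares q f)).card)
        * (((U q.1.1).card : ℝ) * ((U q.1.2).card : ℝ))) :
    ∃ y ∈ Fintype.piFinset U, ∀ q ∈ F, ¬ sat y q := by
  have claim : ∀ B ⊆ F, (1-x) ^ B.card * ((Av U ∅).card : ℝ) ≤ ((Av U B).card : ℝ) := by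
    intro B
    induction B using Finset.induction_on with
    | empty => intro _; simp
    | @insert f B hfB ih =>
      intro hsub
      have hBF : B ⊆ F := fun a ha => hsub (mem_insert_of_mem ha)
      have h1 := ih hBF
      have h2 := main_step U F hF x hx0 hx1 key B.card B hBF rfl f (hsub (mem_insert_self f B)) hfB
      have hxpos : (0:ℝ) < 1 - x := by linarith
      calc (1-x) ^ (insert f B).card * ((Av U ∅).card : ℝ)
          = (1-x) * ((1-x) ^ B.card * ((Av U ∅).card : ℝ)) := by
            rw [card_insert_of_notMem hfB]; ring
        _ ≤ (1-x) * ((Av U B).card : ℝ) := by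
            exact mul_le_mul_of_nonneg_left h1 (le_of_lt hxpos)
        _ ≤ ((Av U (insert f B)).card : ℝ) := h2
  have h0 : (0:ℝ) < ((Av U ∅).card : ℝ) := by
    have : Av U ∅ = Fintype.piFinset U := by simp [Av]
    rw [this]
    have : (Fintype.piFinset U).Nonempty := by
      obtain ⟨y, hy⟩ := Classical.axiomOfChoice (fun i => (hU i))
      exact ⟨y, by simp [Fintype.mem_piFinset]; exact hy⟩
    exact_mod_cast card_pos.2 this
  have hpow : (0:ℝ) < (1-x) ^ F.card := pow_pos (by linarith) _
  have := claim F (subset_refl F)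
  have hpos : (0:ℝ) < ((Av U F).card : ℝ) := lt_of_lt_of_le (by positivity) this
  have : (Av U F).Nonempty := card_pos.1 (by exact_mod_cast hpos)
  obtain ⟨y, hy⟩ := this
  simp only [Av, mem_filter] at hy
  exact ⟨y, hy.1, hy.2⟩


end RWAux

open RWAux in
/-- Reed–Wood Lovász-Local-Lemma based independent transversal lemma. -/
theorem independent_transversal {α : Type*} [Fintype α]
    (H : SimpleGraph α) (r : ℕ) (hr : 2 ≤ r) (d : ℝ) (hd : 0 < d)
    (V : Fin r → Finset α)
    (hcover : ∀ v : α, ∃ i, v ∈ V i)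
    (hdisj : ∀ i j, i ≠ j → Disjoint (V i) (V j))
    (hindep : ∀ i, ∀ u ∈ V i, ∀ v ∈ V i, ¬ H.Adj u v)
    (hsize : ∀ i, 4 * Real.exp 1 * (r - 1) * d ≤ ((V i).card : ℝ))
    (hdegen : ∀ i j, i ≠ j → ∀ s ⊆ V i ∪ V j, s.Nonempty →
      ∃ v ∈ s, ((s.filter (fun u => H.Adj v u)).card : ℝ) ≤ d) :
    ∃ x : Fin r → α, (∀ i, x i ∈ V i) ∧
      ∀ i j, i ≠ j → ¬ H.Adj (x i) (x j) := by
  classical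
  have he : (2.7:ℝ) < Real.exp 1 := by
    have h := Real.exp_one_gt_d9
    norm_num at h ⊢
    linarith
  have he0 : (0:ℝ) < Real.exp 1 := Real.exp_pos 1
  have hr1 : (1:ℝ) ≤ (r:ℝ) - 1 := by
    have h2 : (2:ℝ) ≤ (r:ℝ) := by exact_mod_cast hr
    linarith
  by_cases hd1 : d < 1
  · -- trivial case: no cross edges at all
    have hVne : ∀ i, (V i).Nonempty := by
      intro i
      rw [← Finset.card_pos]
      have hpos : (0:ℝ) < 4 * Real.exp 1 * ((r:ℝ)-1) * d :=
        mul_pos (mul_pos (mul_pos (by norm_num) he0) (by linarith)) hd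
      have h := lt_of_lt_of_le hpos (hsize i)
      exact_mod_cast h
    choose y hy using hVne
    refine ⟨y, hy, ?_⟩
    intro i j hij hadj
    have hsub : ({y i, y j} : Finset α) ⊆ V i ∪ V j := by
      intro w hw
      rcases Finset.mem_insert.1 hw with rfl | hw
      · exact Finset.mem_union_left _ (hy i)
      · rw [Finset.mem_singleton] at hw
        subst hw
        exact Finset.mem_union_right _ (hy j)
    obtain ⟨v, hv, hvd⟩ := hdegen i j hij _ hsub ⟨y i, Finset.mem_insert_self _ _⟩
    have hkey : ∃ w ∈ ({y i, y j} : Finset α), H.Adj v w := by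
      rcases Finset.mem_insert.1 hv with rfl | hv
      · exact ⟨y j, by simp, hadj⟩
      · rw [Finset.mem_singleton] at hv
        subst hv
        exact ⟨y i, by simp, H.adj_symm hadj⟩
    obtain ⟨w, hw, hvw⟩ := hkey
    have hmem : w ∈ ({y i, y j} : Finset α).filter (fun u => H.Adj v u) :=
      Finset.mem_filter.2 ⟨hw, hvw⟩
    have h1 : (1:ℝ) ≤ ((({y i, y j} : Finset α).filter (fun u => H.Adj v u)).card : ℝ) := by
      exact_mod_cast Finset.card_pos.2 ⟨w, hmem⟩
    linarith
  · push_neg at hd1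
    set s : ℕ := ⌈4 * Real.exp 1 * ((r:ℝ) - 1) * d⌉₊ with hsdef
    have hsV : ∀ i, s ≤ (V i).card := by
      intro i
      rw [hsdef]
      exact Nat.ceil_le.2 (hsize i)
    choose U hUV hUcard using fun i => Finset.exists_subset_card_eq (hsV i)
    have hsR : 4 * Real.exp 1 * ((r:ℝ)-1) * d ≤ (s:ℝ) := Nat.le_ceil _
    have hprod : (2.7:ℝ) ≤ Real.exp 1 * (((r:ℝ)-1) * d) := by
      have h1 : (1:ℝ) ≤ ((r:ℝ)-1) * d := by nlinarith
      nlinarith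
    have hsR10 : (10:ℝ) ≤ (s:ℝ) := by nlinarith [hsR, hprod]
    have hs0 : (0:ℝ) < (s:ℝ) := by linarith
    have hUdisj : ∀ i j, i ≠ j → Disjoint (U i) (U j) := fun i j h =>
      Finset.disjoint_of_subset_left (hUV i)
        (Finset.disjoint_of_subset_right (hUV j) (hdisj i j h))
    set F : Finset (Ev α r) := Finset.univ.filter
      (fun q => q.1.1 < q.1.2 ∧ q.2.1 ∈ U q.1.1 ∧ q.2.2 ∈ U q.1.2 ∧ H.Adj q.2.1 q.2.2)
      with hFdef
    have hFmem : ∀ q ∈ F, q.1.1 < q.1.2 ∧ q.2.1 ∈ U q.1.1 ∧ q.2.2 ∈ U q.1.2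
        ∧ H.Adj q.2.1 q.2.2 := by
      intro q hq
      rw [hFdef, Finset.mem_filter] at hq
      exact hq.2
    have pairs_bound : ∀ i k : Fin r, i ≠ k →
        ((((U i) ×ˢ (U k)).filter (fun p => H.Adj p.1 p.2)).card : ℝ) ≤ 2 * d * (s:ℝ) := by
      intro i k hik
      have htV : U i ∪ U k ⊆ V i ∪ V k := Finset.union_subset_union (hUV i) (hUV k)
      have hPt := degen_pairs_bound H d (le_of_lt hd) (V i ∪ V k)
        (fun t' ht' hne => hdegen i k hik t' ht' hne) (U i ∪ U k) htV
      have htcard : (((U i ∪ U k).card : ℕ) : ℝ) = 2 * (s:ℝ) := by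
        rw [Finset.card_union_of_disjoint (hUdisj i k hik), hUcard i, hUcard k]
        push_cast
        ring
      have hsub1 : ((U i) ×ˢ (U k)).filter (fun p => H.Adj p.1 p.2)
          ⊆ ((U i ∪ U k) ×ˢ (U i ∪ U k)).filter (fun p => H.Adj p.1 p.2) := by
        intro p hp
        simp only [Finset.mem_filter, Finset.mem_product, Finset.mem_union] at hp ⊢
        tauto
      have hsub2 : (((U i) ×ˢ (U k)).filter (fun p => H.Adj p.1 p.2)).image Prod.swap
          ⊆ ((U i ∪ U k) ×ˢ (U i ∪ U k)).filter (fun p => H.Adj p.1 p.2) := by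
        intro p hp
        obtain ⟨p', hp', rfl⟩ := Finset.mem_image.1 hp
        simp only [Finset.mem_filter, Finset.mem_product, Finset.mem_union] at hp' ⊢
        exact ⟨⟨Or.inr hp'.1.2, Or.inl hp'.1.1⟩, H.adj_symm hp'.2⟩
      have hdisjp : Disjoint (((U i) ×ˢ (U k)).filter (fun p => H.Adj p.1 p.2))
          ((((U i) ×ˢ (U k)).filter (fun p => H.Adj p.1 p.2)).image Prod.swap) := by
        rw [Finset.disjoint_left]
        intro p hp hp2
        obtain ⟨p', hp', hps⟩ := Finset.mem_image.1 hp2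
        simp only [Finset.mem_filter, Finset.mem_product] at hp hp'
        have hk2 : p.1 ∈ U k := by rw [← hps]; exact hp'.1.2
        exact (Finset.disjoint_left.1 (hUdisj i k hik)) hp.1.1 hk2
      have hcards : (((U i) ×ˢ (U k)).filter (fun p => H.Adj p.1 p.2)).card
          + (((U i) ×ˢ (U k)).filter (fun p => H.Adj p.1 p.2)).card
          ≤ (((U i ∪ U k) ×ˢ (U i ∪ U k)).filter (fun p => H.Adj p.1 p.2)).card := by
        have hu := Finset.card_union_of_disjoint hdisjp
        have himg : ((((U i) ×ˢ (U k)).filter (fun p => H.Adj p.1 p.2)).image Prod.swap).card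
            = (((U i) ×ˢ (U k)).filter (fun p => H.Adj p.1 p.2)).card :=
          Finset.card_image_of_injective _ Prod.swap_injective
        calc (((U i) ×ˢ (U k)).filter (fun p => H.Adj p.1 p.2)).card
              + (((U i) ×ˢ (U k)).filter (fun p => H.Adj p.1 p.2)).card
            = ((((U i) ×ˢ (U k)).filter (fun p => H.Adj p.1 p.2))
              ∪ ((((U i) ×ˢ (U k)).filter (fun p => H.Adj p.1 p.2)).image Prod.swap)).card := by
              rw [hu, himg]
          _ ≤ _ := Finset.card_le_card (Finset.union_subset hsub1 hsub2)
      have hfin : ((((U i) ×ˢ (U k)).filter (fun p => H.Adj p.1 p.2)).card : ℝ)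
          + ((((U i) ×ˢ (U k)).filter (fun p => H.Adj p.1 p.2)).card : ℝ)
          ≤ 2*d*(2*(s:ℝ)) := by
        calc ((((U i) ×ˢ (U k)).filter (fun p => H.Adj p.1 p.2)).card : ℝ)
            + ((((U i) ×ˢ (U k)).filter (fun p => H.Adj p.1 p.2)).card : ℝ)
            ≤ ((((U i ∪ U k) ×ˢ (U i ∪ U k)).filter (fun p => H.Adj p.1 p.2)).card : ℝ) := by
              exact_mod_cast hcards
          _ ≤ 2*d*(((U i ∪ U k).card : ℕ):ℝ) := hPt
          _ = 2*d*(2*(s:ℝ)) := by rw [htcard]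
      nlinarith [hfin]
    have Cik_bound : ∀ i k : Fin r, i ≠ k →
        ((F.filter (fun f => (f.1.1 = i ∧ f.1.2 = k) ∨ (f.1.1 = k ∧ f.1.2 = i))).card : ℝ)
          ≤ 2 * d * (s:ℝ) := by
      have helper : ∀ i k : Fin r, i < k →
          (F.filter (fun f => (f.1.1 = i ∧ f.1.2 = k) ∨ (f.1.1 = k ∧ f.1.2 = i))).card
            ≤ (((U i) ×ˢ (U k)).filter (fun p => H.Adj p.1 p.2)).card := by
        intro i k hik
        apply Finset.card_le_card_of_injOn (fun f => f.2)
        · intro f hf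
          rw [Finset.mem_coe, Finset.mem_filter] at hf
          obtain ⟨hfF, hcase⟩ := hf
          obtain ⟨ho, h1, h2, h3⟩ := hFmem f hfF
          rcases hcase with ⟨e1, e2⟩ | ⟨e1, e2⟩
          · rw [Finset.mem_coe, Finset.mem_filter, Finset.mem_product]
            exact ⟨⟨by rw [← e1]; exact h1, by rw [← e2]; exact h2⟩, h3⟩
          · exfalso
            rw [e1, e2] at ho
            exact absurd hik (not_lt.2 (le_of_lt ho))
        · intro f hf g hg hEq
          simp only [Finset.coe_filter, Set.mem_setOf_eq] at hf hg
          obtain ⟨hfF, hcf⟩ := hf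
          obtain ⟨hgF, hcg⟩ := hg
          have hof := (hFmem f hfF).1
          have hog := (hFmem g hgF).1
          have hf1 : f.1 = (i, k) := by
            rcases hcf with ⟨e1,e2⟩ | ⟨e1,e2⟩
            · exact Prod.ext e1 e2
            · exfalso; rw [e1, e2] at hof; exact absurd hik (not_lt.2 (le_of_lt hof))
          have hg1 : g.1 = (i, k) := by
            rcases hcg with ⟨e1,e2⟩ | ⟨e1,e2⟩
            · exact Prod.ext e1 e2
            · exfalso; rw [e1, e2] at hog; exact absurd hik (not_lt.2 (le_of_lt hog))
          exact Prod.ext (hf1.trans hg1.symm) hEq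
      intro i k hik
      rcases hik.lt_or_gt with h | h
      · exact le_trans (by exact_mod_cast helper i k h) (pairs_bound i k hik)
      · have heq : F.filter (fun f => (f.1.1 = i ∧ f.1.2 = k) ∨ (f.1.1 = k ∧ f.1.2 = i))
            = F.filter (fun f => (f.1.1 = k ∧ f.1.2 = i) ∨ (f.1.1 = i ∧ f.1.2 = k)) := by
          apply Finset.filter_congr
          intro f _
          exact or_comm
        rw [heq]
        exact le_trans (by exact_mod_cast helper k i h) (pairs_bound k i hik.symm)
    have Tbound : ∀ i : Fin r, ((F.filter (fun f => f.1.1 = i ∨ f.1.2 = i)).card : ℝ)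
        ≤ ((r:ℝ) - 1) * (2 * d * (s:ℝ)) := by
      intro i
      have hsubT : F.filter (fun f => f.1.1 = i ∨ f.1.2 = i)
          ⊆ (Finset.univ.erase i).biUnion
            (fun k => F.filter (fun f => (f.1.1 = i ∧ f.1.2 = k) ∨ (f.1.1 = k ∧ f.1.2 = i))) := by
        intro f hf
        rw [Finset.mem_filter] at hf
        obtain ⟨hfF, hcase⟩ := hf
        have ho := (hFmem f hfF).1
        rw [Finset.mem_biUnion]
        rcases hcase with e | e
        · refine ⟨f.1.2, Finset.mem_erase.2 ⟨?_, Finset.mem_univ _⟩, ?_⟩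
          · rw [← e]; exact (ne_of_lt ho).symm
          · exact Finset.mem_filter.2 ⟨hfF, Or.inl ⟨e, rfl⟩⟩
        · refine ⟨f.1.1, Finset.mem_erase.2 ⟨?_, Finset.mem_univ _⟩, ?_⟩
          · rw [← e]; exact (ne_of_lt ho)
          · exact Finset.mem_filter.2 ⟨hfF, Or.inr ⟨rfl, e⟩⟩
      have h1 : (F.filter (fun f => f.1.1 = i ∨ f.1.2 = i)).card
          ≤ ∑ k ∈ Finset.univ.erase i,
            (F.filter (fun f => (f.1.1 = i ∧ f.1.2 = k) ∨ (f.1.1 = k ∧ f.1.2 = i))).card :=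
        le_trans (Finset.card_le_card hsubT) (Finset.card_biUnion_le)
      have h2 : ((F.filter (fun f => f.1.1 = i ∨ f.1.2 = i)).card : ℝ)
          ≤ ∑ k ∈ Finset.univ.erase i,
            ((F.filter (fun f => (f.1.1 = i ∧ f.1.2 = k) ∨ (f.1.1 = k ∧ f.1.2 = i))).card : ℝ) := by
        exact_mod_cast h1
      refine le_trans h2 ?_
      have h3 : ∑ k ∈ Finset.univ.erase i,
            ((F.filter (fun f => (f.1.1 = i ∧ f.1.2 = k) ∨ (f.1.1 = k ∧ f.1.2 = i))).card : ℝ)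
          ≤ ∑ _k ∈ Finset.univ.erase i, (2 * d * (s:ℝ)) :=
        Finset.sum_le_sum (fun k hk => Cik_bound i k (Ne.symm (Finset.mem_erase.1 hk).1))
      refine le_trans h3 ?_
      rw [Finset.sum_const, nsmul_eq_mul]
      have hcarderase : ((Finset.univ.erase i).card : ℝ) = (r:ℝ) - 1 := by
        rw [Finset.card_erase_of_mem (Finset.mem_univ i), Finset.card_univ, Fintype.card_fin]
        have h1r : 1 ≤ r := le_trans (by norm_num) hr
        push_cast [Nat.cast_sub h1r]
        ring
      rw [hcarderase]
    set x : ℝ := Real.exp 1 / (s:ℝ)^2 with hx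
    have hx0 : 0 < x := by rw [hx]; positivity
    have helt : Real.exp 1 < 2.7182818286 := by
      have h := Real.exp_one_lt_d9
      norm_num at h ⊢
      linarith
    have hx1 : x < 1 := by
      rw [hx, div_lt_one (by positivity)]
      nlinarith
    have hkey : ∀ q ∈ F, (1:ℝ) ≤ x * (1-x) ^ ((F.filter (fun f => f ≠ q ∧ shares q f)).card)
        * (((U q.1.1).card : ℝ) * ((U q.1.2).card : ℝ)) := by
      intro q hq
      obtain ⟨ho, hu, hv, hadj⟩ := hFmem q hq
      set Γ := F.filter (fun f => f ≠ q ∧ shares q f) with hΓ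
      set Ti := F.filter (fun f => f.1.1 = q.1.1 ∨ f.1.2 = q.1.1) with hTi
      set Tj := F.filter (fun f => f.1.1 = q.1.2 ∨ f.1.2 = q.1.2) with hTj
      have hΓsub : Γ ⊆ (Ti ∪ Tj).erase q := by
        intro f hf
        rw [hΓ, Finset.mem_filter] at hf
        obtain ⟨hfF, hne, hsh⟩ := hf
        rw [Finset.mem_erase]
        refine ⟨hne, ?_⟩
        rw [Finset.mem_union]
        rcases hsh with h|h|h|h
        · exact Or.inl (Finset.mem_filter.2 ⟨hfF, Or.inl h⟩)
        · exact Or.inr (Finset.mem_filter.2 ⟨hfF, Or.inl h⟩)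
        · exact Or.inl (Finset.mem_filter.2 ⟨hfF, Or.inr h⟩)
        · exact Or.inr (Finset.mem_filter.2 ⟨hfF, Or.inr h⟩)
      have hqTi : q ∈ Ti := Finset.mem_filter.2 ⟨hq, Or.inl rfl⟩
      have hqTj : q ∈ Tj := Finset.mem_filter.2 ⟨hq, Or.inr rfl⟩
      have hnat : Γ.card + 2 ≤ Ti.card + Tj.card := by
        have h1 : Γ.card ≤ ((Ti ∪ Tj).erase q).card := Finset.card_le_card hΓsub
        have h2 : ((Ti ∪ Tj).erase q).card = (Ti ∪ Tj).card - 1 :=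
          Finset.card_erase_of_mem (Finset.mem_union_left _ hqTi)
        have h3 : 1 ≤ (Ti ∩ Tj).card :=
          Finset.card_pos.2 ⟨q, Finset.mem_inter.2 ⟨hqTi, hqTj⟩⟩
        have h4 := Finset.card_union_add_card_inter Ti Tj
        have h5 : 1 ≤ (Ti ∪ Tj).card :=
          Finset.card_pos.2 ⟨q, Finset.mem_union_left _ hqTi⟩
        omega
      have hmR : ((Γ.card : ℝ)) + 2 ≤ ((r:ℝ)-1) * (2*d*(s:ℝ)) + ((r:ℝ)-1)*(2*d*(s:ℝ)) := by
        have hb1 := Tbound q.1.1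
        have hb2 := Tbound q.1.2
        have hcast : ((Γ.card:ℝ)) + 2 ≤ (Ti.card:ℝ) + (Tj.card:ℝ) := by exact_mod_cast hnat
        rw [← hTi] at hb1
        rw [← hTj] at hb2
        linarith
      have hstep : Real.exp 1 * ((Γ.card:ℝ) + 1) ≤ (s:ℝ)^2 := by
        nlinarith [mul_le_mul_of_nonneg_right hsR (le_of_lt hs0),
          mul_le_mul_of_nonneg_left hmR (le_of_lt he0), he0]
      have hmx : ((Γ.card:ℝ)) * x ≤ 1 - x := by
        have hsum : ((Γ.card:ℝ)) * x + x = (Real.exp 1 * ((Γ.card:ℝ)+1))/(s:ℝ)^2 := by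
          rw [hx]; ring
        have h6 : (Real.exp 1 * ((Γ.card:ℝ)+1))/(s:ℝ)^2 ≤ 1 := by
          rw [div_le_one (by positivity)]
          exact hstep
        linarith [hsum ▸ h6]
      have hexp := exp_neg_one_le_pow hx0 hx1 hmx
      have hcards : ((U q.1.1).card : ℝ) * ((U q.1.2).card : ℝ) = (s:ℝ)^2 := by
        rw [hUcard, hUcard]; ring
      rw [hcards]
      have hxs : x * (s:ℝ)^2 = Real.exp 1 := by
        rw [hx]; field_simp
      calc (1:ℝ) = Real.exp 1 * Real.exp (-1) := by rw [← Real.exp_add]; norm_num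
        _ ≤ Real.exp 1 * (1-x)^Γ.card := mul_le_mul_of_nonneg_left hexp (le_of_lt he0)
        _ = x * (1-x) ^ Γ.card * (s:ℝ)^2 := by rw [← hxs]; ring
    have hUne : ∀ i, (U i).Nonempty := by
      intro i
      rw [← Finset.card_pos, hUcard]
      have h10 : (10:ℕ) ≤ s := by exact_mod_cast hsR10
      omega
    have hFprop : ∀ q ∈ F, q.1.1 ≠ q.1.2 ∧ q.2.1 ∈ U q.1.1 ∧ q.2.2 ∈ U q.1.2 := by
      intro q hq
      obtain ⟨ho, h1, h2, _⟩ := hFmem q hq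
      exact ⟨ne_of_lt ho, h1, h2⟩
    obtain ⟨y, hy, havoid⟩ := lll U hUne F hFprop x hx0 hx1 hkey
    refine ⟨y, ?_, ?_⟩
    · intro i
      exact hUV i (Fintype.mem_piFinset.1 hy i)
    · intro i j hij hadj
      rcases hij.lt_or_gt with h | h
      · have hqF : (((i,j),(y i, y j)) : Ev α r) ∈ F := by
          rw [hFdef, Finset.mem_filter]
          exact ⟨Finset.mem_univ _, h, Fintype.mem_piFinset.1 hy i,
            Fintype.mem_piFinset.1 hy j, hadj⟩
        exact havoid _ hqF ⟨rfl, rfl⟩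
      · have hqF : (((j,i),(y j, y i)) : Ev α r) ∈ F := by
          rw [hFdef, Finset.mem_filter]
          exact ⟨Finset.mem_univ _, h, Fintype.mem_piFinset.1 hy j,
            Fintype.mem_piFinset.1 hy i, H.adj_symm hadj⟩
        exact havoid _ hqF ⟨rfl, rfl⟩
end

section
/- Let G be a directed graph and let W be a family of closed walks in G such that every walk in W visits a nonempty set of vertices and the intersection graph I(W) (vertices are members of W, edges join walks sharing a vertex of G) contains a clique minor of size d. Then G contains a bramble of size d. Moreover, if the congestion of W is at most α (no vertex of G lies on more than α walks of W), then the bramble has congestion at most α. -/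
open scoped Classical

/-- A set `S` of vertices induces a strongly connected subgraph of the digraph `A`. -/
def StronglyConn {V : Type*} (A : V → V → Prop) (S : Set V) : Prop :=
  ∀ u ∈ S, ∀ v ∈ S, Relation.ReflTransGen (fun a b => a ∈ S ∧ b ∈ S ∧ A a b) u v

/-- A bramble of size `d` in the digraph `A`: a family of nonempty strongly connected
vertex sets such that any two either intersect or are joined by arcs in both directions. -/
def IsBramble {V : Type*} (A : V → V → Prop) {d : ℕ} (B : Fin d → Set V) : Prop :=
  (∀ i, (B i).Nonempty ∧ StronglyConn A (B i)) ∧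
  ∀ i j, i ≠ j →
    ((B i ∩ B j).Nonempty ∨
      ((∃ u ∈ B i, ∃ v ∈ B j, A u v) ∧ (∃ u ∈ B j, ∃ v ∈ B i, A u v)))

/-- Clique minor of size `d` in a simple graph. -/
def HasCliqueMinor {V : Type*} [DecidableEq V] (H : SimpleGraph V) (p : ℕ) : Prop :=
  ∃ B : Fin p → Finset V,
    (∀ i, (B i).Nonempty) ∧
    (∀ i j, i ≠ j → Disjoint (B i) (B j)) ∧
    (∀ i, (H.induce (B i : Set V)).Connected) ∧
    (∀ i j, i ≠ j → ∃ u ∈ B i, ∃ v ∈ B j, H.Adj u v)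

private lemma reach_getLast {V : Type*} {A : V → V → Prop} :
    ∀ (L : List V) (_ : L.Chain' A) (u : V) (_ : u ∈ L) (h : L ≠ []),
      Relation.ReflTransGen (fun a b => a ∈ L ∧ b ∈ L ∧ A a b) u (L.getLast h) := by
  intro L
  induction L with
  | nil => simp
  | cons x xs ih =>
    intro hch u hu h
    cases xs with
    | nil =>
      simp only [List.mem_singleton] at hu
      subst hu
      exact Relation.ReflTransGen.refl
    | cons y ys =>
      have hch' : (y::ys).Chain' A := hch.tail
      have hxy : A x y := (List.isChain_cons_cons.mp hch).1
      have mono : ∀ a b : V, (a ∈ y::ys ∧ b ∈ y::ys ∧ A a b) →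
          (a ∈ x::y::ys ∧ b ∈ x::y::ys ∧ A a b) := by
        rintro a b ⟨ha, hb, hab⟩
        exact ⟨List.mem_cons_of_mem _ ha, List.mem_cons_of_mem _ hb, hab⟩
      have hgl : (x::y::ys).getLast h = (y::ys).getLast (by simp) :=
        List.getLast_cons (by simp)
      have key : ∀ w ∈ y::ys,
          Relation.ReflTransGen (fun a b => a ∈ x::y::ys ∧ b ∈ x::y::ys ∧ A a b)
            w ((x::y::ys).getLast h) := by
        intro w hw
        rw [hgl]
        exact Relation.ReflTransGen.mono mono _ _ (ih hch' w hw (by simp))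
      rcases List.mem_cons.mp hu with rfl | hu'
      · refine Relation.ReflTransGen.head ⟨by simp, by simp, hxy⟩ (key y (by simp))
      · exact key u hu'

private lemma reach_from_head {V : Type*} {A : V → V → Prop} :
    ∀ (L : List V) (_ : L.Chain' A) (h : L ≠ []) (v : V) (_ : v ∈ L),
      Relation.ReflTransGen (fun a b => a ∈ L ∧ b ∈ L ∧ A a b) (L.head h) v := by
  intro L
  induction L with
  | nil => simp
  | cons x xs ih =>
    intro hch h v hv
    rcases List.mem_cons.mp hv with rfl | hv'
    · exact Relation.ReflTransGen.refl
    · cases xs with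
      | nil => simp at hv'
      | cons y ys =>
        have hch' : (y::ys).Chain' A := hch.tail
        have hxy : A x y := (List.isChain_cons_cons.mp hch).1
        have mono : ∀ a b : V, (a ∈ y::ys ∧ b ∈ y::ys ∧ A a b) →
            (a ∈ x::y::ys ∧ b ∈ x::y::ys ∧ A a b) := by
          rintro a b ⟨ha, hb, hab⟩
          exact ⟨List.mem_cons_of_mem _ ha, List.mem_cons_of_mem _ hb, hab⟩
        have := Relation.ReflTransGen.mono mono _ _ (ih hch' (by simp) v hv')
        exact Relation.ReflTransGen.head ⟨by simp, by simp, hxy⟩ this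

private lemma closed_walk_reach {V : Type*} {A : V → V → Prop} {S : Set V} (L : List V)
    (hLS : ∀ x ∈ L, x ∈ S) (hch : L.Chain' A) (hcl : L.head? = L.getLast?)
    {u v : V} (hu : u ∈ L) (hv : v ∈ L) :
    Relation.ReflTransGen (fun a b => a ∈ S ∧ b ∈ S ∧ A a b) u v := by
  have h : L ≠ [] := List.ne_nil_of_mem hu
  have hhl : L.head h = L.getLast h := by
    have h1 : L.head? = some (L.head h) := List.head?_eq_head h
    have h2 : L.getLast? = some (L.getLast h) := List.getLast?_eq_getLast h
    rw [h1, h2] at hcl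
    exact Option.some_injective _ hcl
  have r1 := reach_getLast L hch u hu h
  have r2 := reach_from_head L hch h v hv
  rw [← hhl] at r1
  have := r1.trans r2
  exact Relation.ReflTransGen.mono (fun a b (⟨ha, hb, hab⟩ : a ∈ L ∧ b ∈ L ∧ A a b) => ⟨hLS a ha, hLS b hb, hab⟩) _ _ this

/-- Dense winning scenario: a family of closed walks of congestion `α` whose
intersection graph has a clique minor of size `d` yields a bramble of size `d`
and congestion at most `α`. -/
theorem bramble_from_clique_minor_of_walks {V : Type*} [Fintype V]
    (A : V → V → Prop) (m d α : ℕ) (W : Fin m → List V)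
    (hne : ∀ i, W i ≠ [])
    (hwalk : ∀ i, (W i).Chain' A)
    (hclosed : ∀ i, (W i).head? = (W i).getLast?)
    (hminor : HasCliqueMinor
      (SimpleGraph.fromRel (fun i j : Fin m => ∃ v, v ∈ W i ∧ v ∈ W j)) d)
    (hcong : ∀ v : V, (Finset.univ.filter (fun i => v ∈ W i)).card ≤ α) :
    ∃ B : Fin d → Set V, IsBramble A B ∧
      ∀ v : V, (Finset.univ.filter (fun i => v ∈ B i)).card ≤ α := by
    classical
  set H := SimpleGraph.fromRel (fun i j : Fin m => ∃ v, v ∈ W i ∧ v ∈ W j) with hH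
  obtain ⟨Bi, hBne, hBdisj, hBconn, hBadj⟩ := hminor
  refine ⟨fun i => {v | ∃ j ∈ Bi i, v ∈ W j}, ⟨?_, ?_⟩, ?_⟩
  · intro i
    constructor
    · obtain ⟨j, hj⟩ := hBne i
      obtain ⟨v, hv⟩ := List.exists_mem_of_ne_nil (W j) (hne j)
      exact ⟨v, j, hj, hv⟩
    · intro u hu v hv
      set S : Set V := {v | ∃ j ∈ Bi i, v ∈ W j} with hS
      obtain ⟨j, hj, huj⟩ := hu
      obtain ⟨k, hk, hvk⟩ := hv
      have hsub : ∀ l ∈ Bi i, ∀ x ∈ W l, x ∈ S := fun l hl x hx => ⟨l, hl, hx⟩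
      have hreach : ∀ a b : (Bi i : Set (Fin m)),
          Relation.ReflTransGen (H.induce (Bi i : Set (Fin m))).Adj a b →
          ∀ u ∈ W a.val, ∀ v ∈ W b.val,
          Relation.ReflTransGen (fun a b => a ∈ S ∧ b ∈ S ∧ A a b) u v := by
        intro a b hab
        induction hab with
        | refl =>
          intro u hu v hv
          exact closed_walk_reach (W a.val) (hsub _ a.2) (hwalk _) (hclosed _) hu hv
        | tail hrc hadj ih =>
          rename_i c b'
          intro u hu v hv
          have hadj' : H.Adj c.val b'.val := hadj
          rw [hH, SimpleGraph.fromRel_adj] at hadj'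
          obtain ⟨-, hc | hc⟩ := hadj'
          · obtain ⟨w, hw1, hw2⟩ := hc
            exact (ih u hu w hw1).trans
              (closed_walk_reach (W b'.val) (hsub _ b'.2) (hwalk _) (hclosed _) hw2 hv)
          · obtain ⟨w, hw1, hw2⟩ := hc
            exact (ih u hu w hw2).trans
              (closed_walk_reach (W b'.val) (hsub _ b'.2) (hwalk _) (hclosed _) hw1 hv)
      have hconn := hBconn i
      have hr : (H.induce (Bi i : Set (Fin m))).Reachable ⟨j, hj⟩ ⟨k, hk⟩ :=
        hconn.preconnected _ _
      rw [SimpleGraph.reachable_iff_reflTransGen] at hr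
      exact hreach ⟨j, hj⟩ ⟨k, hk⟩ hr u huj v hvk
  · intro i j hij
    left
    obtain ⟨a, ha, b, hb, hadj⟩ := hBadj i j hij
    rw [hH, SimpleGraph.fromRel_adj] at hadj
    obtain ⟨-, hc | hc⟩ := hadj
    · obtain ⟨v, hv1, hv2⟩ := hc
      exact ⟨v, ⟨a, ha, hv1⟩, ⟨b, hb, hv2⟩⟩
    · obtain ⟨v, hv1, hv2⟩ := hc
      exact ⟨v, ⟨a, ha, hv2⟩, ⟨b, hb, hv1⟩⟩
  · intro v
    simp only [Set.mem_setOf_eq]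
    rcases Nat.eq_zero_or_pos m with hm | hm
    · haveI : IsEmpty (Fin d) :=
        ⟨fun i => (hBne i).elim (fun j _ => (hm ▸ j : Fin 0).elim0)⟩
      rw [Finset.univ_eq_empty, Finset.filter_empty, Finset.card_empty]
      exact Nat.zero_le _
    · haveI : Nonempty (Fin m) := Fin.pos_iff_nonempty.mp hm
      set f : Fin d → Fin m := fun i =>
        if h : ∃ j ∈ Bi i, v ∈ W j then h.choose else Classical.arbitrary _ with hf
      refine le_trans (Finset.card_le_card_of_injOn f ?_ ?_) (hcong v)
      · intro i hi
        simp only [Finset.mem_coe, Finset.mem_filter] at hi ⊢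
        refine ⟨Finset.mem_univ _, ?_⟩
        rw [hf]
        simp only [hi.2, dif_pos]
        exact hi.2.choose_spec.2
      · intro i1 h1 i2 h2 heq
        simp only [Finset.coe_filter, Set.mem_setOf_eq] at h1 h2
        by_contra hne'
        have hm1 : f i1 ∈ Bi i1 := by
          rw [hf]; simp only [h1.2, dif_pos]; exact h1.2.choose_spec.1
        have hm2 : f i2 ∈ Bi i2 := by
          rw [hf]; simp only [h2.2, dif_pos]; exact h2.2.choose_spec.1
        rw [heq] at hm1
        exact Finset.disjoint_left.mp (hBdisj i1 i2 hne') hm1 hm2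
end

section
/- Let k, x, d be positive integers with b ≥ x·d + (d−1), and let W be a walk that is the concatenation L₁, Q₁, L₂, Q₂, ..., Q_{b−1}, L_b of b vertex-disjoint paths L₁,...,L_b interleaved with paths Q₁,...,Q_{b−1} (a threaded linkage of size b). Then at least one of the following holds: (1) there exist d closed subwalks of W that are pairwise obtained from disjoint index intervals, each fully containing a distinct path L_i; or (2) there is a contiguous subwalk W' of W containing at least x of the paths L_i entirely and containing no closed subwalk that fully contains some L_i (i.e., the corresponding threaded linkage is untangled). -/
/-!
Greedily pick useful closed subwalks `[p, q]` (`W[p] = W[q]` with some `L_i` inside), each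
with the smallest right end among those starting after the previous pick. If this succeeds
`d` times we are done. Otherwise the stretch before each pick contains no useful walk, and by
the ordering of the `L_i` at most one of them passes through a chosen right end; so if each of
the at most `d - 1` stretches before a pick held fewer than `x` paths, the stretches and picks
account for at most `(d - 1) x` paths, and the final stretch, free of useful walks, holds the
remaining `x` or more.
-/

open Finset

section UsefulWalks

variable {V : Type*} (W : List V) {b : ℕ} (s e : Fin b → ℕ)

def IsUsefulWalk (p q : ℕ) : Prop :=
  p ≤ q ∧ q < W.length ∧ W[p]? = W[q]? ∧ ∃ i, p ≤ s i ∧ e i ≤ q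

def IsUntangled (p q : ℕ) : Prop :=
  ∀ p' q' : ℕ, p ≤ p' → p' < q' → q' ≤ q → W[p']? = W[q']? →
    ∀ i : Fin b, ¬ (p' ≤ s i ∧ e i ≤ q')

def IsUsefulFamily (t : ℕ) {n : ℕ} (p q : Fin n → ℕ) : Prop :=
  (∀ j, t ≤ p j ∧ IsUsefulWalk W s e (p j) (q j)) ∧ ∀ j j', j < j' → q j < p j'

def pathsWithin (p q : ℕ) : Finset (Fin b) :=
  univ.filter fun i => p ≤ s i ∧ e i ≤ q

variable {W s e}

theorem isUntangled_of_forall_not_isUsefulWalk {p q : ℕ} (hq : q < W.length)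
    (h : ∀ p' q', p ≤ p' → p' < q' → q' ≤ q → ¬ IsUsefulWalk W s e p' q') :
    IsUntangled W s e p q :=
  fun p' q' hp' hpq' hq' hW i hi => h p' q' hp' hpq' hq' ⟨hpq'.le, by omega, hW, i, hi⟩

theorem IsUsefulFamily.cons {t p₀ q₀ n : ℕ} {p q : Fin n → ℕ} (htp₀ : t ≤ p₀)
    (h₀ : IsUsefulWalk W s e p₀ q₀) (h : IsUsefulFamily W s e (q₀ + 1) p q) :
    IsUsefulFamily W s e t (Fin.cons p₀ p : Fin (n + 1) → ℕ) (Fin.cons q₀ q) := by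
  obtain ⟨huse, hsep⟩ := h
  refine ⟨Fin.forall_fin_succ.mpr ⟨⟨htp₀, h₀⟩, fun j => ?_⟩, ?_⟩
  · have := (huse j).1
    have := h₀.1
    exact ⟨by simp only [Fin.cons_succ]; omega, by simpa using (huse j).2⟩
  · intro j j' hjj'
    induction j using Fin.cases with
    | zero =>
      induction j' using Fin.cases with
      | zero => exact absurd hjj' (lt_irrefl _)
      | succ k => simpa using (huse k).1
    | succ a =>
      induction j' using Fin.cases with
      | zero => exact absurd hjj' (Fin.not_lt_zero _)
      | succ k => simpa using hsep a k (Fin.succ_lt_succ_iff.mp hjj')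

theorem le_of_mem_pathsWithin (hse : ∀ i, s i ≤ e i) {p q : ℕ} {i : Fin b}
    (hi : i ∈ pathsWithin s e p q) : p ≤ q := by
  simp only [pathsWithin, mem_filter, mem_univ, true_and] at hi
  exact hi.1.trans ((hse i).trans hi.2)

theorem card_filter_le_card_pathsWithin_length (hlen : ∀ i, e i < W.length) (t : ℕ) :
    (univ.filter fun i => t ≤ s i).card ≤ (pathsWithin s e t (W.length - 1)).card :=
  card_le_card fun i hi => by
    simp only [pathsWithin, mem_filter, mem_univ, true_and] at hi ⊢
    exact ⟨hi, by have := hlen i; omega⟩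

theorem card_straddling_le_one (hord : ∀ i j : Fin b, i < j → e i < s j) (q : ℕ) :
    (univ.filter fun i => s i ≤ q ∧ q ≤ e i).card ≤ 1 := by
  refine card_le_one.mpr fun i hi j hj => ?_
  simp only [mem_filter, mem_univ, true_and] at hi hj
  by_contra hne
  rcases lt_or_gt_of_ne hne with hij | hji
  · have := hord i j hij; omega
  · have := hord j i hji; omega

/-- The paths starting at or after `t` end before `q`, pass through `q`, or start after `q`. -/
theorem card_filter_le_split (hord : ∀ i j : Fin b, i < j → e i < s j) (t q : ℕ) :
    (univ.filter fun i => t ≤ s i).card ≤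
      (pathsWithin s e t (q - 1)).card + 1 + (univ.filter fun i => q + 1 ≤ s i).card := by
  have hcover : (univ.filter fun i => t ≤ s i) ⊆ pathsWithin s e t (q - 1) ∪
      (univ.filter fun i => s i ≤ q ∧ q ≤ e i) ∪ univ.filter fun i => q + 1 ≤ s i := by
    intro i hi
    simp only [pathsWithin, mem_union, mem_filter, mem_univ, true_and] at hi ⊢
    omega
  have := card_straddling_le_one hord q
  calc _ ≤ _ := card_le_card hcover
    _ ≤ _ := card_union_le _ _
    _ ≤ _ := by grw [card_union_le]
    _ ≤ _ := by omega

theorem usefulFamily_or_untangled (hlen : ∀ i, e i < W.length)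
    (hord : ∀ i j : Fin b, i < j → e i < s j) {x : ℕ} (hx : 0 < x) (n : ℕ) :
    ∀ t, x * n + (n - 1) ≤ (univ.filter fun i => t ≤ s i).card →
      (∃ p q : Fin n → ℕ, IsUsefulFamily W s e t p q) ∨
      ∃ p q, q < W.length ∧ x ≤ (pathsWithin s e p q).card ∧ IsUntangled W s e p q := by
  induction n with
  | zero => exact fun _ _ => .inl ⟨fun j => j.elim0, fun j => j.elim0, fun j => j.elim0, fun j => j.elim0⟩
  | succ n ih =>
    intro t hcard
    rw [Nat.mul_succ] at hcard
    by_cases huse : ∃ q p, t ≤ p ∧ IsUsefulWalk W s e p q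
    · classical
      obtain ⟨p₀, htp₀, h₀⟩ := Nat.find_spec huse
      set q₀ := Nat.find huse
      have hq₀ := h₀.2.1
      by_cases hbefore : x ≤ (pathsWithin s e t (q₀ - 1)).card
      · refine .inr ⟨t, q₀ - 1, by omega, hbefore,
          isUntangled_of_forall_not_isUsefulWalk (by omega) fun p' q' hp' hpq' hq' h' => ?_⟩
        exact Nat.find_min huse (by omega : q' < q₀) ⟨p', hp', h'⟩
      · have := card_filter_le_split hord t q₀
        rcases ih (q₀ + 1) (by omega) with ⟨p, q, hfam⟩ | huntangled
        · exact .inl ⟨_, _, hfam.cons htp₀ h₀⟩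
        · exact .inr huntangled
    · push Not at huse
      have hall := card_filter_le_card_pathsWithin_length (s := s) hlen t
      obtain ⟨i, -⟩ := card_pos.mp (show 0 < (univ.filter fun i => t ≤ s i).card by omega)
      refine .inr ⟨t, W.length - 1, by have := hlen i; omega, by omega,
        isUntangled_of_forall_not_isUsefulWalk (by have := hlen i; omega)
          fun p' q' hp' _ _ => huse q' p' hp'⟩

end UsefulWalks

theorem Function.injective_of_separated {ι : Type*} [LinearOrder ι] {b : ℕ}
    {s e : Fin b → ℕ} (hse : ∀ i, s i ≤ e i) {p q : ι → ℕ}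
    (hsep : ∀ j j', j < j' → q j < p j') {f : ι → Fin b}
    (hf : ∀ j, p j ≤ s (f j) ∧ e (f j) ≤ q j) : Function.Injective f := by
  intro j j' hjj'
  by_contra hne
  rcases lt_or_gt_of_ne hne with hlt | hlt
  · have := hsep j j' hlt; have := hf j; have := hf j'; have := hse (f j); rw [hjj'] at *; omega
  · have := hsep j' j hlt; have := hf j; have := hf j'; have := hse (f j); rw [hjj'] at *; omega

theorem closed_walks_or_untangled_general {V : Type*}
    (b x d : ℕ) (hx : 0 < x)
    (hbig : x * d + (d - 1) ≤ b)
    (W : List V)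
    (s e : Fin b → ℕ)
    (hse : ∀ i, s i ≤ e i)
    (hlen : ∀ i, e i < W.length)
    (hord : ∀ i j : Fin b, i < j → e i < s j) :
    (∃ p q : Fin d → ℕ,
      (∀ j, p j ≤ q j) ∧ (∀ j, q j < W.length) ∧
      (∀ j j' : Fin d, j < j' → q j < p j') ∧
      (∀ j, W[p j]? = W[q j]?) ∧
      ∃ f : Fin d → Fin b, Function.Injective f ∧
        ∀ j, p j ≤ s (f j) ∧ e (f j) ≤ q j) ∨
    (∃ p q : ℕ, p ≤ q ∧ q < W.length ∧
      x ≤ (Finset.univ.filter (fun i : Fin b => p ≤ s i ∧ e i ≤ q)).card ∧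
      ∀ p' q' : ℕ, p ≤ p' → p' < q' → q' ≤ q → W[p']? = W[q']? →
        ∀ i : Fin b, ¬ (p' ≤ s i ∧ e i ≤ q')) := by
  have hcard : (univ.filter fun i : Fin b => 0 ≤ s i).card = b := by simp
  rcases usefulFamily_or_untangled hlen hord hx d 0 (by rwa [hcard]) with
    ⟨p, q, huse, hsep⟩ | ⟨p, q, hq, hpaths, huntangled⟩
  · choose f hf using fun j => (huse j).2.2.2.2
    exact .inl ⟨p, q, fun j => (huse j).2.1, fun j => (huse j).2.2.1, hsep,
      fun j => (huse j).2.2.2.1, f, Function.injective_of_separated hse hsep hf, hf⟩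
  · obtain ⟨i, hi⟩ := card_pos.mp (hx.trans_le hpaths)
    exact .inr ⟨p, q, le_of_mem_pathsWithin hse hi, hq, hpaths, huntangled⟩

/-- Construction of closed walks or an untangled threaded linkage.
The walk `W` contains `b` pairwise vertex-disjoint paths `L_i`, marked by the
index segments `[s i, e i]`, appearing in this order along `W` (the pieces of `W`
between them are the threads). Then either there are `d` closed subwalks of `W`
on pairwise disjoint index intervals, each fully containing a distinct `L_i`, or
there is a contiguous subwalk of `W` containing at least `x` of the `L_i` entirely
and containing no closed subwalk fully containing some `L_i`. -/
theorem closed_walks_or_untangled {V : Type*} (A : V → V → Prop)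
    (b x d : ℕ) (hb : 0 < b) (hx : 0 < x) (hd : 0 < d)
    (hbig : x * d + (d - 1) ≤ b)
    (W : List V) (hW : W.Chain' A)
    (s e : Fin b → ℕ)
    (hse : ∀ i, s i ≤ e i)
    (hlen : ∀ i, e i < W.length)
    (hord : ∀ i j : Fin b, i < j → e i < s j)
    (hdisj : ∀ i j : Fin b, i ≠ j → ∀ p q : ℕ,
      s i ≤ p → p ≤ e i → s j ≤ q → q ≤ e j → W[p]? ≠ W[q]?) :
    (∃ p q : Fin d → ℕ,
      (∀ j, p j ≤ q j) ∧ (∀ j, q j < W.length) ∧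
      (∀ j j' : Fin d, j < j' → q j < p j') ∧
      (∀ j, W[p j]? = W[q j]?) ∧
      ∃ f : Fin d → Fin b, Function.Injective f ∧
        ∀ j, p j ≤ s (f j) ∧ e (f j) ≤ q j) ∨
    (∃ p q : ℕ, p ≤ q ∧ q < W.length ∧
      x ≤ (Finset.univ.filter (fun i : Fin b => p ≤ s i ∧ e i ≤ q)).card ∧
      ∀ p' q' : ℕ, p ≤ p' → p' < q' → q' ≤ q → W[p']? = W[q']? →
        ∀ i : Fin b, ¬ (p' ≤ s i ∧ e i ≤ q')) :=
  closed_walks_or_untangled_general b x d hx hbig W s e hse hlen hord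
end

section
/- Suppose an a×a grid of ordered index pairs V = {(i,j) : i,j ∈ [a], i≠j} is covered by three overlapping index sets I₁ = V \ (A ∪ Z), I₂ = A ∪ B ∪ Z, I₃ = V \ B where A, B, Z ⊆ V, A ∩ Z = ∅, and |B ∩ (A ∪ Z)| ≤ |B \ (A ∪ Z)|. Then max(|I₁|, |I₂|, |I₃|) ≥ (3/5)·|V|. -/
open Finset

/-- The off-diagonal grid of ordered index pairs. -/
def offDiag' (a : ℕ) : Finset (Fin a × Fin a) :=
  Finset.univ.filter (fun p : Fin a × Fin a => p.1 ≠ p.2)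

/-! With `X = A ∪ Z`, the weighted count `2|V \ X| + 2|X ∪ B| + |V \ B|` equals
`3|V| + |B \ X| - |B ∩ X| ≥ 3|V|`. The weights sum to `5`, so the largest of the three sets
has at least `3/5` of `V`. -/

theorem Finset.three_mul_card_le_of_card_inter_le_card_sdiff {α : Type*} [DecidableEq α]
    {V X B : Finset α} (hX : X ⊆ V) (hB : B ⊆ V) (hsplit : #(B ∩ X) ≤ #(B \ X)) :
    3 * #V ≤ 2 * #(V \ X) + 2 * #(X ∪ B) + #(V \ B) := by
  have hVX : #(V \ X) + #X = #V := card_sdiff_add_card_eq_card hX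
  have hVB : #(V \ B) + #B = #V := card_sdiff_add_card_eq_card hB
  have hXB : #(X ∪ B) = #X + #(B \ X) := by
    rw [← card_union_of_disjoint disjoint_sdiff, union_sdiff_self_eq_union]
  have hBX : #(B ∩ X) + #(B \ X) = #B := card_inter_add_card_sdiff B X
  omega

theorem three_fifths_mul_le_max_of_three_mul_le {K : Type*} [Field K] [LinearOrder K]
    [IsStrictOrderedRing K] {n x y z : K} (h : 3 * n ≤ 2 * x + 2 * y + z) :
    3 / 5 * n ≤ max (max x y) z := by
  have hx : x ≤ max (max x y) z := le_max_of_le_left (le_max_left x y)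
  have hy : y ≤ max (max x y) z := le_max_of_le_left (le_max_right x y)
  have hz : z ≤ max (max x y) z := le_max_right _ z
  linarith

theorem three_cases_general (a : ℕ) (A B Z : Finset (Fin a × Fin a))
    (hA : A ⊆ offDiag' a) (hB : B ⊆ offDiag' a) (hZ : Z ⊆ offDiag' a)
    (hBsplit : (B ∩ (A ∪ Z)).card ≤ (B \ (A ∪ Z)).card) :
    (3 : ℚ) / 5 * ((offDiag' a).card : ℚ) ≤
      max (max (((offDiag' a \ (A ∪ Z)).card : ℚ)) (((A ∪ B ∪ Z).card : ℚ)))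
        (((offDiag' a \ B).card : ℚ)) := by
  have hcount := three_mul_card_le_of_card_inter_le_card_sdiff (union_subset hA hZ) hB hBsplit
  rw [union_right_comm] at hcount
  exact three_fifths_mul_le_max_of_three_mul_le (by exact_mod_cast hcount)

/-- Abstract form of the case-distinction claim: if `A, B, Z ⊆ V` (the off-diagonal
grid) with `A ∩ Z = ∅` and `|B ∩ (A ∪ Z)| ≤ |B \ (A ∪ Z)|`, then one of the three
sets `V \ (A ∪ Z)`, `A ∪ B ∪ Z`, `V \ B` has size at least `(3/5)·|V|`. -/
theorem three_cases (a : ℕ) (A B Z : Finset (Fin a × Fin a))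
    (hA : A ⊆ offDiag' a) (hB : B ⊆ offDiag' a) (hZ : Z ⊆ offDiag' a)
    (hAZ : Disjoint A Z)
    (hBsplit : (B ∩ (A ∪ Z)).card ≤ (B \ (A ∪ Z)).card) :
    (3 : ℚ) / 5 * ((offDiag' a).card : ℚ) ≤
      max (max (((offDiag' a \ (A ∪ Z)).card : ℚ)) (((A ∪ B ∪ Z).card : ℚ)))
        (((offDiag' a \ B).card : ℚ)) :=
  three_cases_general a A B Z hA hB hZ hBsplit
end
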